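/- arXiv:2012.06535 — 2 statements merged into one kernel-verified Lean document; each statement's English description precedes it below -/
import Mathlib

section
/- Let f : (X,d) → (Y,ρ) be a function between metric spaces. The following are equivalent: (a) f is TB-regular; (b) for every metric space (Z,μ) and every TB-regular function g : (Y,ρ) → (Z,μ), the composition g ∘ f is TB-regular; (c) for every metric space (Z,μ) and every Cauchy continuous function g : (Y,ρ) → (Z,μ), the composition g ∘ f is TB-regular; (d) for every metric space (Z,μ) and every Cauchy-Lipschitz function g : (Y,ρ) → (Z,μ), the composition g ∘ f is TB-regular; (e) for every metric space (Z,μ) and every uniformly locally Lipschitz function g : (Y,ρ) → (Z,μ), the composition g ∘ f is TB-regular; (f) for every uniformly locally Lipschitz function g : (Y,ρ) → ℝ, the composition g ∘ f is TB-regular. -/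
universe u v w

/-- `f` is TB-regular if it maps totally bounded sets to totally bounded sets. -/
def TBRegular {X : Type u} {Y : Type v} [MetricSpace X] [MetricSpace Y] (f : X → Y) : Prop :=
  ∀ A : Set X, TotallyBounded A → TotallyBounded (f '' A)

/-- `f` is Cauchy continuous if it maps Cauchy sequences to Cauchy sequences. -/
def CauchyCont {X : Type u} {Y : Type v} [MetricSpace X] [MetricSpace Y] (f : X → Y) : Prop :=
  ∀ u : ℕ → X, CauchySeq u → CauchySeq (f ∘ u)

/-- `f` is Cauchy-Lipschitz if it is Lipschitz on the range of each Cauchy sequence. -/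
def CauchyLip {X : Type u} {Y : Type v} [MetricSpace X] [MetricSpace Y] (f : X → Y) : Prop :=
  ∀ u : ℕ → X, CauchySeq u → ∃ K : NNReal, LipschitzOnWith K f (Set.range u)

/-- `f` is uniformly locally Lipschitz if there is a `δ > 0` such that `f` is Lipschitz (with a
constant depending on the point) on each open ball of radius `δ`. -/
def UnifLocallyLip {X : Type u} {Y : Type v} [MetricSpace X] [MetricSpace Y] (f : X → Y) : Prop :=
  ∃ δ > (0 : ℝ), ∀ x : X, ∃ k > (0 : ℝ),
    ∀ u ∈ Metric.ball x δ, ∀ w ∈ Metric.ball x δ, dist (f u) (f w) ≤ k * dist u w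

section Aux

variable {X : Type*} {Y : Type*} [MetricSpace X] [MetricSpace Y]

/-- From a non-totally-bounded set one can extract a uniformly separated sequence. -/
lemma exists_separated_seq {s : Set Y} (h : ¬ TotallyBounded s) :
    ∃ ε > (0 : ℝ), ∃ y : ℕ → Y, (∀ n, y n ∈ s) ∧ ∀ m n, m ≠ n → ε ≤ dist (y m) (y n) := by
  classical
  rw [Metric.totallyBounded_iff] at h
  push_neg at h
  obtain ⟨ε, εpos, hε⟩ := h
  have key : ∀ t : Finset Y, ∃ z ∈ s, ∀ w ∈ t, ε ≤ dist z w := by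
    intro t
    have hns := hε (↑t) t.finite_toSet
    obtain ⟨z, hzs, hz⟩ := Set.not_subset.1 hns
    simp only [Set.mem_iUnion, not_exists, Metric.mem_ball, not_lt, Finset.mem_coe] at hz
    exact ⟨z, hzs, fun w hw => hz w hw⟩
  choose! F hFs hFd using key
  let g : ℕ → Finset Y := fun n => Nat.rec (motive := fun _ => Finset Y) ∅ (fun _ t => insert (F t) t) n
  have hg_succ : ∀ n, g (n + 1) = insert (F (g n)) (g n) := fun n => rfl
  have hmono : Monotone g := monotone_nat_of_le_succ fun n => by
    rw [hg_succ]; exact Finset.subset_insert _ _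
  refine ⟨ε, εpos, fun n => F (g n), fun n => hFs (g n), ?_⟩
  have hlt : ∀ m n, m < n → ε ≤ dist (F (g n)) (F (g m)) := by
    intro m n hmn
    apply hFd (g n)
    have h1 : F (g m) ∈ g (m + 1) := by rw [hg_succ]; exact Finset.mem_insert_self _ _
    exact hmono hmn h1
  intro m n hmn
  rcases lt_or_gt_of_ne hmn with h | h
  · rw [dist_comm]; exact hlt m n h
  · exact hlt n m h

/-- Every sequence in a totally bounded set has a Cauchy subsequence. -/
lemma exists_cauchy_subseq {s : Set Y} (hs : TotallyBounded s) (u : ℕ → Y) (hu : ∀ n, u n ∈ s) :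
    ∃ φ : ℕ → ℕ, StrictMono φ ∧ CauchySeq (u ∘ φ) := by
  set e : Y → UniformSpace.Completion Y := ((↑) : Y → UniformSpace.Completion Y) with he_def
  have he : Isometry e := UniformSpace.Completion.coe_isometry
  have h1 : TotallyBounded (e '' s) := hs.image he.uniformContinuous
  have h2 : IsCompact (closure (e '' s)) :=
    isCompact_iff_totallyBounded_isComplete.2 ⟨h1.closure, isClosed_closure.isComplete⟩
  obtain ⟨l, -, φ, hφ, hconv⟩ := h2.tendsto_subseq (x := fun n => e (u n))
    (fun n => subset_closure ⟨u n, hu n, rfl⟩)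
  refine ⟨φ, hφ, ?_⟩
  have hc : CauchySeq ((fun n => e (u n)) ∘ φ) := hconv.cauchySeq
  rw [Metric.cauchySeq_iff] at hc ⊢
  intro ε εpos
  obtain ⟨N, hN⟩ := hc ε εpos
  refine ⟨N, fun m hm n hn => ?_⟩
  have := hN m hm n hn
  simpa [Function.comp, he.dist_eq] using this

/-- A Cauchy-continuous map is TB-regular. -/
lemma CauchyCont.tbRegular {g : X → Y} (hg : CauchyCont g) : TBRegular g := by
  intro A hA
  by_contra h
  obtain ⟨ε, εpos, y, hys, hsep⟩ := exists_separated_seq h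
  have hmem : ∀ n, ∃ a ∈ A, g a = y n := fun n => hys n
  choose a ha hga using hmem
  obtain ⟨φ, hφ, hc⟩ := exists_cauchy_subseq hA a ha
  have hc2 := hg _ hc
  rw [Metric.cauchySeq_iff] at hc2
  obtain ⟨N, hN⟩ := hc2 ε εpos
  have h1 := hN N le_rfl (N + 1) (Nat.le_succ N)
  have h2 : dist ((g ∘ (a ∘ φ)) N) ((g ∘ (a ∘ φ)) (N + 1))
      = dist (y (φ N)) (y (φ (N + 1))) := by
    simp [Function.comp, hga]
  rw [h2] at h1
  exact absurd h1 (not_lt.2 (hsep _ _ (hφ (Nat.lt_succ_self N)).ne))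

lemma CauchyLip.cauchyCont {g : X → Y} (hg : CauchyLip g) : CauchyCont g := fun u hu => by
  obtain ⟨K, hK⟩ := hg u hu
  exact hK.cauchySeq_comp hu subset_rfl

/-- A uniformly locally Lipschitz map is Lipschitz on every totally bounded set. -/
lemma UnifLocallyLip.lipschitzOnWith_of_totallyBounded {g : X → Y} (hg : UnifLocallyLip g)
    {S : Set X} (hS : TotallyBounded S) : ∃ K : NNReal, LipschitzOnWith K g S := by
  obtain ⟨δ, δpos, hδ⟩ := hg
  choose k kpos hk using hδ
  obtain ⟨t, htf, hcov⟩ := Metric.totallyBounded_iff.1 hS (δ / 2) (by positivity)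
  set K0 : ℝ := 1 + ∑ c ∈ htf.toFinset, k c with hK0
  have hK0pos : 0 < K0 := by
    have : (0 : ℝ) ≤ ∑ c ∈ htf.toFinset, k c :=
      Finset.sum_nonneg fun i _ => (kpos i).le
    linarith
  have hkle : ∀ c ∈ t, k c ≤ K0 := by
    intro c hc
    have : k c ≤ ∑ c ∈ htf.toFinset, k c :=
      Finset.single_le_sum (fun i _ => (kpos i).le) (htf.mem_toFinset.2 hc)
    linarith
  -- each point of S lies in a ball of radius δ/2 around some center in t
  have hptc : ∀ p ∈ S, ∃ c ∈ t, dist p c < δ / 2 := by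
    intro p hp
    have := hcov hp
    simp only [Set.mem_iUnion, Metric.mem_ball] at this
    obtain ⟨c, hc, h⟩ := this
    exact ⟨c, hc, h⟩
  -- the image g '' S is bounded
  have hbd : Bornology.IsBounded (g '' S) := by
    have hsub : g '' S ⊆ ⋃ c ∈ t, Metric.ball (g c) (K0 * δ) := by
      rintro _ ⟨p, hp, rfl⟩
      obtain ⟨c, hc, hpc⟩ := hptc p hp
      have hpball : p ∈ Metric.ball c δ := by
        rw [Metric.mem_ball]; linarith
      have hcball : c ∈ Metric.ball c δ := by
        rw [Metric.mem_ball, dist_self]; exact δpos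
      have := hk c p hpball c hcball
      simp only [Set.mem_iUnion, Metric.mem_ball]
      refine ⟨c, hc, ?_⟩
      have h1 : k c * dist p c ≤ K0 * (δ / 2) := by
        apply mul_le_mul (hkle c hc) hpc.le dist_nonneg hK0pos.le
      calc dist (g p) (g c) ≤ k c * dist p c := this
        _ ≤ K0 * (δ / 2) := h1
        _ < K0 * δ := by nlinarith
    exact ((Bornology.isBounded_biUnion htf).2 fun _ _ => Metric.isBounded_ball).subset hsub
  obtain ⟨C, hC⟩ := Metric.isBounded_iff.1 hbd
  refine ⟨(K0 + max C 0 * (2 / δ)).toNNReal, LipschitzOnWith.of_dist_le' ?_⟩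
  intro p hp q hq
  have hM0 : (0 : ℝ) ≤ max C 0 * (2 / δ) := by positivity
  have hMge : K0 ≤ K0 + max C 0 * (2 / δ) := le_add_of_nonneg_right hM0
  rcases lt_or_ge (dist p q) (δ / 2) with h | h
  · obtain ⟨c, hc, hpc⟩ := hptc p hp
    have hpball : p ∈ Metric.ball c δ := by rw [Metric.mem_ball]; linarith
    have hqball : q ∈ Metric.ball c δ := by
      rw [Metric.mem_ball]
      calc dist q c ≤ dist q p + dist p c := dist_triangle _ _ _
        _ < δ / 2 + δ / 2 := by rw [dist_comm q p]; exact add_lt_add h hpc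
        _ = δ := by ring
    calc dist (g p) (g q) ≤ k c * dist p q := hk c p hpball q hqball
      _ ≤ (K0 + max C 0 * (2 / δ)) * dist p q := by
          apply mul_le_mul_of_nonneg_right _ dist_nonneg
          exact le_trans (hkle c hc) hMge
  · have h1 : dist (g p) (g q) ≤ C := hC ⟨p, hp, rfl⟩ ⟨q, hq, rfl⟩
    have h2 : C ≤ max C 0 := le_max_left _ _
    have h3 : max C 0 = max C 0 * (2 / δ) * (δ / 2) := by field_simp
    have h4 : max C 0 * (2 / δ) * (δ / 2) ≤ max C 0 * (2 / δ) * dist p q := by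
      apply mul_le_mul_of_nonneg_left h (by positivity)
    have h5 : max C 0 * (2 / δ) * dist p q ≤ (K0 + max C 0 * (2 / δ)) * dist p q := by
      apply mul_le_mul_of_nonneg_right _ dist_nonneg
      linarith [hK0pos]
    linarith

lemma UnifLocallyLip.cauchyLip {g : X → Y} (hg : UnifLocallyLip g) : CauchyLip g :=
  fun u hu => hg.lipschitzOnWith_of_totallyBounded hu.totallyBounded_range

lemma TBRegular.comp {Z : Type*} [MetricSpace Z] {g : Y → Z} {f : X → Y}
    (hg : TBRegular g) (hf : TBRegular f) : TBRegular (g ∘ f) := fun A hA => by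
  rw [Set.image_comp]
  exact hg _ (hf A hA)

end Aux

section Bump

variable {Y : Type*} [MetricSpace Y]

/-- If `s` is not totally bounded, there is a uniformly locally Lipschitz real-valued function
taking arbitrarily large natural values on `s`. -/
lemma exists_ull_real_unbounded {s : Set Y} (h : ¬ TotallyBounded s) :
    ∃ g : Y → ℝ, UnifLocallyLip g ∧ ∀ n : ℕ, ∃ z ∈ s, g z = n := by
  classical
  obtain ⟨ε, εpos, y, hys, hsep⟩ := exists_separated_seq h
  have huniq : ∀ z : Y, ∀ m n : ℕ, dist z (y m) < ε/4 → dist z (y n) < ε/4 → m = n := by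
    intro z m n hm hn
    by_contra hne
    have h1 := hsep m n hne
    have h2 : dist (y m) (y n) ≤ dist (y m) z + dist z (y n) := dist_triangle _ _ _
    rw [dist_comm (y m) z] at h2
    linarith
  set g : Y → ℝ := fun z =>
    if h : ∃ n, dist z (y n) < ε/4 then
      (h.choose : ℝ) * max 0 (1 - (4/ε) * dist z (y h.choose)) else 0 with hgdef
  have hg_eq : ∀ z n, dist z (y n) < ε/4 → g z = n * max 0 (1 - (4/ε) * dist z (y n)) := by
    intro z n hzn
    have hex : ∃ m, dist z (y m) < ε/4 := ⟨n, hzn⟩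
    have hch : hex.choose = n := huniq z _ n hex.choose_spec hzn
    rw [hgdef]
    simp only [dif_pos hex, hch]
  have hg0 : ∀ z, (∀ n, ¬ dist z (y n) < ε/4) → g z = 0 := by
    intro z hz
    rw [hgdef]
    exact dif_neg (not_exists.2 hz)
  have hgy : ∀ n : ℕ, g (y n) = n := by
    intro n
    rw [hg_eq (y n) n (by rw [dist_self]; positivity)]
    simp
  refine ⟨g, ?_, fun n => ⟨y n, hys n, hgy n⟩⟩
  refine ⟨ε/8, by positivity, fun x => ?_⟩
  by_cases hx : ∃ n, dist x (y n) < ε/4 + ε/8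
  · obtain ⟨n, hn⟩ := hx
    refine ⟨(n : ℝ) * (4/ε) + 1, by positivity, fun p hp q hq => ?_⟩
    rw [Metric.mem_ball] at hp hq
    have key : ∀ z, dist z x < ε/8 → g z = n * max 0 (1 - (4/ε) * dist z (y n)) := by
      intro z hz
      by_cases hzn : dist z (y n) < ε/4
      · exact hg_eq z n hzn
      · push_neg at hzn
        have h0 : ∀ m, ¬ dist z (y m) < ε/4 := by
          intro m hm
          have hmn : m = n := by
            by_contra hne
            have h1 := hsep m n hne
            have h2 : dist (y m) (y n) ≤ dist (y m) z + dist z x + dist x (y n) :=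
              dist_triangle4 _ _ _ _
            rw [dist_comm (y m) z] at h2
            linarith
          rw [hmn] at hm
          linarith
        rw [hg0 z h0]
        have hle : 1 - (4/ε) * dist z (y n) ≤ 0 := by
          have h1 : (4/ε) * (ε/4) ≤ (4/ε) * dist z (y n) :=
            mul_le_mul_of_nonneg_left hzn (by positivity)
          have h2 : (4/ε) * (ε/4) = 1 := by field_simp
          linarith
        rw [max_eq_left hle, mul_zero]
    rw [key p hp, key q hq, Real.dist_eq, ← mul_sub, abs_mul]
    have h1 : |max 0 (1 - 4/ε * dist p (y n)) - max 0 (1 - 4/ε * dist q (y n))|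
        ≤ 4/ε * dist p q := by
      rw [max_comm 0 (1 - 4/ε * dist p (y n)), max_comm 0 (1 - 4/ε * dist q (y n))]
      refine le_trans (abs_max_sub_max_le_abs _ _ _) ?_
      have h2 : (1 - 4/ε * dist p (y n)) - (1 - 4/ε * dist q (y n))
          = (4/ε) * (dist q (y n) - dist p (y n)) := by ring
      rw [h2, abs_mul, abs_of_pos (by positivity : (0:ℝ) < 4/ε)]
      apply mul_le_mul_of_nonneg_left _ (by positivity : (0:ℝ) ≤ 4/ε)
      rw [abs_sub_comm]
      exact abs_dist_sub_le _ _ _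
    rw [abs_of_nonneg (Nat.cast_nonneg n : (0:ℝ) ≤ n)]
    have h3 : (n : ℝ) * |max 0 (1 - 4/ε * dist p (y n)) - max 0 (1 - 4/ε * dist q (y n))|
        ≤ (n : ℝ) * (4/ε * dist p q) := mul_le_mul_of_nonneg_left h1 (Nat.cast_nonneg n)
    nlinarith [dist_nonneg (x := p) (y := q)]
  · push_neg at hx
    refine ⟨1, one_pos, fun p hp q hq => ?_⟩
    rw [Metric.mem_ball] at hp hq
    have hzero : ∀ z, dist z x < ε/8 → g z = 0 := by
      intro z hz
      apply hg0
      intro m hm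
      have h1 := hx m
      have h2 : dist x (y m) ≤ dist x z + dist z (y m) := dist_triangle _ _ _
      rw [dist_comm x z] at h2
      linarith
    rw [hzero p hp, hzero q hq, dist_self]
    positivity

end Bump

theorem tbRegular_iff_compositions {X : Type u} {Y : Type v} [MetricSpace X] [MetricSpace Y]
    (f : X → Y) :
    List.TFAE
      [TBRegular f,
       ∀ (Z : Type w) [MetricSpace Z] (g : Y → Z), TBRegular g → TBRegular (g ∘ f),
       ∀ (Z : Type w) [MetricSpace Z] (g : Y → Z), CauchyCont g → TBRegular (g ∘ f),
       ∀ (Z : Type w) [MetricSpace Z] (g : Y → Z), CauchyLip g → TBRegular (g ∘ f),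
       ∀ (Z : Type w) [MetricSpace Z] (g : Y → Z), UnifLocallyLip g → TBRegular (g ∘ f),
       ∀ g : Y → ℝ, UnifLocallyLip g → TBRegular (g ∘ f)] := by
  have hdownR : Isometry (ULift.down : ULift.{w} ℝ → ℝ) := Isometry.of_dist_eq fun _ _ => rfl
  have hlift : ∀ g : Y → ℝ, UnifLocallyLip g →
      UnifLocallyLip ((ULift.up : ℝ → ULift.{w} ℝ) ∘ g) := by
    rintro g ⟨δ, δpos, hδ⟩
    refine ⟨δ, δpos, fun x => ?_⟩
    obtain ⟨k, kpos, hk⟩ := hδ x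
    exact ⟨k, kpos, fun u hu w hw => hk u hu w hw⟩
  have hdown : ∀ g : Y → ℝ,
      TBRegular (((ULift.up : ℝ → ULift.{w} ℝ) ∘ g) ∘ f) → TBRegular (g ∘ f) := by
    intro g h A hA
    have h1 := h A hA
    have h2 : (g ∘ f) '' A = ULift.down '' ((((ULift.up : ℝ → ULift.{w} ℝ) ∘ g) ∘ f) '' A) := by
      rw [← Set.image_comp]
      rfl
    rw [h2]
    exact h1.image hdownR.uniformContinuous
  tfae_have 1 → 2 := fun h Z _ g hg => hg.comp h
  tfae_have 1 → 3 := fun h Z _ g hg => hg.tbRegular.comp h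
  tfae_have 1 → 4 := fun h Z _ g hg => hg.cauchyCont.tbRegular.comp h
  tfae_have 1 → 5 := fun h Z _ g hg => hg.cauchyLip.cauchyCont.tbRegular.comp h
  tfae_have 2 → 6 := fun h g hg =>
    hdown g (h (ULift.{w} ℝ) (ULift.up ∘ g) (hlift g hg).cauchyLip.cauchyCont.tbRegular)
  tfae_have 3 → 6 := fun h g hg =>
    hdown g (h (ULift.{w} ℝ) (ULift.up ∘ g) (hlift g hg).cauchyLip.cauchyCont)
  tfae_have 4 → 6 := fun h g hg =>
    hdown g (h (ULift.{w} ℝ) (ULift.up ∘ g) (hlift g hg).cauchyLip)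
  tfae_have 5 → 6 := fun h g hg =>
    hdown g (h (ULift.{w} ℝ) (ULift.up ∘ g) (hlift g hg))
  tfae_have 6 → 1 := by
    intro h A hA
    by_contra hnot
    obtain ⟨g, hgULL, hgn⟩ := exists_ull_real_unbounded hnot
    have h1 := h g hgULL A hA
    obtain ⟨C, hC⟩ := Metric.isBounded_iff.1 h1.isBounded
    obtain ⟨N, hN⟩ := exists_nat_gt C
    have hmem : ∀ n : ℕ, (n : ℝ) ∈ (g ∘ f) '' A := by
      intro n
      obtain ⟨z, hz, hze⟩ := hgn n
      obtain ⟨a, ha, rfl⟩ := hz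
      exact ⟨a, ha, hze⟩
    have hd : dist (N : ℝ) ((0 : ℕ) : ℝ) ≤ C := hC (hmem N) (hmem 0)
    rw [Nat.cast_zero, Real.dist_eq, sub_zero, abs_of_nonneg (Nat.cast_nonneg N)] at hd
    linarith
  tfae_finish
end

section
/- Let (X,d) be a metric space. The following are equivalent: (a) (X,d) is complete; (b) for every metric space (Y,ρ) and every continuous function f : (X,d) → (Y,ρ), the family of subsets of X on which f is Cauchy continuous forms a bornology; (c) for every continuous function f : (X,d) → ℝ, the family of subsets of X on which f is Cauchy continuous forms a bornology (equivalently, is closed under finite unions). -/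
universe u v

/-- `f` is Cauchy continuous on `B` if it maps Cauchy sequences contained in `B` to Cauchy
sequences. -/
def CauchyContOn {X : Type u} {Y : Type v} [MetricSpace X] [MetricSpace Y]
    (f : X → Y) (B : Set X) : Prop :=
  ∀ u : ℕ → X, (∀ n, u n ∈ B) → CauchySeq u → CauchySeq (f ∘ u)

/-- A family of nonempty subsets of `X` is a bornology if it covers `X`, is hereditary
(closed under taking nonempty subsets) and is closed under finite unions. -/
def IsBornologyFam {X : Type u} (𝓑 : Set (Set X)) : Prop :=
  (∀ x : X, ∃ B ∈ 𝓑, x ∈ B) ∧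
  (∀ A B : Set X, B ∈ 𝓑 → A ⊆ B → A.Nonempty → A ∈ 𝓑) ∧
  (∀ A B : Set X, A ∈ 𝓑 → B ∈ 𝓑 → A ∪ B ∈ 𝓑)

/-!
In a complete space every continuous map is Cauchy continuous on every set. Conversely, if `X` is
not complete, some injective Cauchy sequence `u` has no limit, hence no cluster point; so every set
of its terms is closed, in particular its even-indexed and its odd-indexed terms form two disjoint
closed sets. An Urysohn function that is `0` on the first and `1` on the second is Cauchy
continuous on each of them (being constant there) but not on their union, which contains `u`.
-/

open Filter Set Topology Function Uniformity

section Sequences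

variable {α : Type*}

theorem exists_injective_comp_of_finite_fiber {u : ℕ → α} (hu : ∀ y, (u ⁻¹' {y}).Finite) :
    ∃ φ : ℕ → ℕ, Injective (u ∘ φ) := by
  obtain ⟨φ, -, hφ⟩ := exists_seq_of_forall_finset_exists (fun _ => True)
    (fun m n => u m ≠ u n) fun s _ => by
      obtain ⟨n, hn⟩ := ((s.finite_toSet.image u).preimage' fun y _ => hu y).exists_notMem
      exact ⟨n, trivial, fun m hm h => hn ⟨m, hm, h⟩⟩
  refine ⟨φ, fun m n h => ?_⟩
  by_contra hmn
  rcases lt_or_gt_of_ne hmn with hlt | hlt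
  exacts [hφ m n hlt h, hφ n m hlt h.symm]

variable [UniformSpace α]

theorem CauchySeq.locallyFinite_singleton {u : ℕ → α} (hu : CauchySeq u)
    (hlim : ∀ x, ¬Tendsto u atTop (𝓝 x)) : LocallyFinite fun n => ({u n} : Set α) := by
  intro x
  have hx : ¬MapClusterPt x atTop u := fun hx => hlim x (le_nhds_of_cauchy_adhp hu hx)
  simp only [mapClusterPt_iff_frequently, not_forall, not_frequently, exists_prop] at hx
  obtain ⟨t, ht, hev⟩ := hx
  refine ⟨t, ht, ?_⟩
  simpa [← Nat.cofinite_eq_atTop, eventually_cofinite] using hev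

theorem exists_injective_cauchySeq_not_tendsto [IsCountablyGenerated (𝓤 α)]
    (h : ¬CompleteSpace α) :
    ∃ u : ℕ → α, Injective u ∧ CauchySeq u ∧ ∀ x, ¬Tendsto u atTop (𝓝 x) := by
  have : ∃ u : ℕ → α, CauchySeq u ∧ ∀ x, ¬Tendsto u atTop (𝓝 x) := by
    by_contra! H
    exact h (UniformSpace.complete_of_cauchySeq_tendsto H)
  obtain ⟨u, hu, hlim⟩ := this
  obtain ⟨φ, hφ⟩ := exists_injective_comp_of_finite_fiber fun y =>
    ((hu.locallyFinite_singleton hlim).point_finite y).subset fun _ => Eq.symm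
  have hφ_tendsto : Tendsto φ atTop atTop := hφ.of_comp.nat_tendsto_atTop
  exact ⟨u ∘ φ, hφ, hu.comp_tendsto hφ_tendsto, fun x hx =>
    hlim x (tendsto_nhds_of_cauchySeq_of_subseq hu hφ_tendsto hx)⟩

end Sequences

theorem not_cauchySeq_of_alternating {Y : Type*} [MetricSpace Y] {g : ℕ → Y} {a b : Y}
    (hab : a ≠ b) (ha : ∀ n, g (2 * n) = a) (hb : ∀ n, g (2 * n + 1) = b) : ¬CauchySeq g := by
  intro hg
  obtain ⟨N, hN⟩ := Metric.cauchySeq_iff.1 hg (dist a b) (dist_pos.2 hab)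
  simpa [ha, hb] using hN (2 * N) (by omega) (2 * N + 1) (by omega)

section CauchyContOn

variable {X : Type u} {Y : Type v} [MetricSpace X] [MetricSpace Y] {f : X → Y}

theorem cauchyContOn_of_eqOn_const {B : Set X} {c : Y} (h : EqOn f (fun _ => c) B) :
    CauchyContOn f B := fun u hu _ => by
  rw [show f ∘ u = fun _ => c from funext fun n => h (hu n)]
  exact cauchySeq_const c

theorem CauchyContOn.mono {A B : Set X} (hB : CauchyContOn f B) (hAB : A ⊆ B) :
    CauchyContOn f A :=
  fun u hu => hB u fun n => hAB (hu n)

theorem Continuous.cauchyContOn [CompleteSpace X] (hf : Continuous f) (B : Set X) :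
    CauchyContOn f B := fun _ _ hu =>
  let ⟨x, hx⟩ := cauchySeq_tendsto_of_complete hu
  ((hf.tendsto x).comp hx).cauchySeq

theorem cauchyContOn_comp_iff {Z : Type*} [MetricSpace Z] {g : Y → Z}
    (hg : IsUniformInducing g) {B : Set X} : CauchyContOn (g ∘ f) B ↔ CauchyContOn f B := by
  refine forall_congr' fun u => imp_congr_right fun _ => imp_congr_right fun _ => ?_
  rw [CauchySeq, CauchySeq, comp_assoc, ← map_map, hg.cauchy_map_iff]

theorem isBornologyFam_cauchyContOn_iff :
    IsBornologyFam {B : Set X | B.Nonempty ∧ CauchyContOn f B} ↔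
      ∀ A B : Set X, CauchyContOn f A → CauchyContOn f B → CauchyContOn f (A ∪ B) := by
  refine ⟨fun ⟨_, _, hunion⟩ A B hA hB => ?_, fun h => ⟨fun x => ?_, ?_, ?_⟩⟩
  · rcases A.eq_empty_or_nonempty with rfl | hA_ne
    · rwa [empty_union]
    rcases B.eq_empty_or_nonempty with rfl | hB_ne
    · rwa [union_empty]
    exact (hunion A B ⟨hA_ne, hA⟩ ⟨hB_ne, hB⟩).2
  · exact ⟨{x}, ⟨singleton_nonempty x, cauchyContOn_of_eqOn_const fun _ => congrArg f⟩, rfl⟩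
  · exact fun A B hB hAB hA => ⟨hA, hB.2.mono hAB⟩
  · exact fun A B hA hB => ⟨hA.1.mono subset_union_left, h A B hA.2 hB.2⟩

end CauchyContOn

theorem exists_continuous_not_cauchyContOn_union {X : Type u} [MetricSpace X]
    (hX : ¬CompleteSpace X) : ∃ f : X → ℝ, Continuous f ∧ ∃ A B : Set X,
      CauchyContOn f A ∧ CauchyContOn f B ∧ ¬CauchyContOn f (A ∪ B) := by
  obtain ⟨u, hinj, hu, hlim⟩ := exists_injective_cauchySeq_not_tendsto hX
  have hclosed : ∀ φ : ℕ → ℕ, Injective φ → IsClosed (range (u ∘ φ)) := fun φ hφ => by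
    rw [← iUnion_singleton_eq_range]
    exact ((hu.locallyFinite_singleton hlim).comp_injective hφ).isClosed_iUnion
      fun _ => isClosed_singleton
  set A := range fun n => u (2 * n)
  set B := range fun n => u (2 * n + 1)
  have hdisj : Disjoint A B := disjoint_left.2 fun _ ⟨m, hm⟩ ⟨n, hn⟩ => by
    have := hinj (hm.trans hn.symm)
    omega
  obtain ⟨f, hfA, hfB, -⟩ := exists_continuous_zero_one_of_isClosed
    (hclosed _ fun m n h => by simpa using h) (hclosed _ fun m n h => by simpa using h) hdisj
  refine ⟨f, f.continuous, A, B, cauchyContOn_of_eqOn_const hfA,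
    cauchyContOn_of_eqOn_const hfB, fun hAB => ?_⟩
  have hmem : ∀ n, u n ∈ A ∪ B := fun n => by
    obtain ⟨k, rfl | rfl⟩ := Nat.even_or_odd' n
    exacts [Or.inl ⟨k, rfl⟩, Or.inr ⟨k, rfl⟩]
  exact not_cauchySeq_of_alternating zero_ne_one (fun n => hfA ⟨n, rfl⟩)
    (fun n => hfB ⟨n, rfl⟩) (hAB u hmem hu)

theorem complete_iff_cauchyContOn_bornology {X : Type u} [MetricSpace X] :
    List.TFAE
      [CompleteSpace X,
       ∀ (Y : Type v) [MetricSpace Y] (f : X → Y), Continuous f →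
         IsBornologyFam {B : Set X | B.Nonempty ∧ CauchyContOn f B},
       ∀ f : X → ℝ, Continuous f →
         IsBornologyFam {B : Set X | B.Nonempty ∧ CauchyContOn f B}] := by
  tfae_have 1 → 2 := fun _ _ _ _ hf =>
    isBornologyFam_cauchyContOn_iff.2 fun A B _ _ => hf.cauchyContOn (A ∪ B)
  tfae_have 2 → 3 := fun h f hf => by
    have hup : IsUniformInducing (ULift.up.{v} : ℝ → ULift ℝ) :=
      (Isometry.of_dist_eq (f := (ULift.up : ℝ → ULift ℝ)) fun _ _ => rfl).isUniformInducing
    simpa only [cauchyContOn_comp_iff hup] using h (ULift ℝ) (ULift.up ∘ f)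
      (continuous_uliftUp.comp hf)
  tfae_have 3 → 1 := fun h => by
    by_contra hX
    obtain ⟨f, hf, A, B, hA, hB, hAB⟩ := exists_continuous_not_cauchyContOn_union hX
    exact hAB (isBornologyFam_cauchyContOn_iff.1 (h f hf) A B hA hB)
  tfae_finish
end
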